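/- arXiv:1911.03774 — 7 statements merged into one kernel-verified Lean document; each statement's English description precedes it below -/
import Mathlib

section
/- If x ∈ ℝⁿ solves f_M(x) = q, then z = proj_{ℝ₊ⁿ}(−x) (componentwise, z_i = max(−x_i, 0)) solves the linear complementarity problem (M,q): setting w = Mz + q, one has w ≥ 0, z ≥ 0, and wᵀz = 0. -/
open Matrix

/-- Complementary matrix `C_M(α)`: j-th column is `-M_{·j}` if `j ∈ α`, else `e_j`. -/
def compMat {n : ℕ} (M : Matrix (Fin n) (Fin n) ℝ) (α : Finset (Fin n)) :
    Matrix (Fin n) (Fin n) ℝ :=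
  fun i j => if j ∈ α then -M i j else (if i = j then 1 else 0)

/-- The orthant `pos C_I(α)`: `x_j ≤ 0` for `j ∈ α`, `x_j ≥ 0` otherwise. -/
def orthant {n : ℕ} (α : Finset (Fin n)) : Set (Fin n → ℝ) :=
  {x | ∀ j, if j ∈ α then x j ≤ 0 else 0 ≤ x j}

/-- The cone generated by the columns of `A`. -/
def posCone {n : ℕ} (A : Matrix (Fin n) (Fin n) ℝ) : Set (Fin n → ℝ) :=
  {q | ∃ p : Fin n → ℝ, (∀ j, 0 ≤ p j) ∧ q = A.mulVec p}

/-- The piecewise linear map `f_M`, in closed form: on the orthant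
`pos C_I(α)` this map equals `x ↦ C_{-M}(α) x`. -/
def fpl {n : ℕ} (M : Matrix (Fin n) (Fin n) ℝ) (x : Fin n → ℝ) : Fin n → ℝ :=
  fun i => max (x i) 0 - M.mulVec (fun j => max (-x j) 0) i

/-- `z` solves the LCP `(M, q)`: with `w = Mz + q`, one has `z ≥ 0`, `w ≥ 0`, `wᵀz = 0`. -/
def isLCPsol {ι : Type*} [Fintype ι] (M : Matrix ι ι ℝ) (q z : ι → ℝ) : Prop :=
  (∀ i, 0 ≤ z i) ∧ (∀ i, 0 ≤ (M.mulVec z + q) i) ∧ (∀ i, (M.mulVec z + q) i * z i = 0)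

/-! With `x = x⁺ - x⁻`, the definition reads `f_M(x) = x⁺ - M x⁻`, so for `z = x⁻` the vector
`w = M z + q` is exactly `x⁺`. Both parts are nonnegative and have disjoint supports. -/

lemma max_mul_max_neg_eq_zero {α : Type*} [Ring α] [LinearOrder α] [IsOrderedRing α] (a : α) :
    max a 0 * max (-a) 0 = 0 := by
  rcases le_total a 0 with ha | ha
  · rw [max_eq_right ha, zero_mul]
  · rw [max_eq_right (neg_nonpos.mpr ha), mul_zero]

lemma mulVec_negPart_add_fpl {n : ℕ} (M : Matrix (Fin n) (Fin n) ℝ) (x : Fin n → ℝ) :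
    M *ᵥ (fun j => max (-x j) 0) + fpl M x = fun i => max (x i) 0 := by
  ext i
  simp [fpl]

theorem stmt_1 {n : ℕ} (M : Matrix (Fin n) (Fin n) ℝ) (q x : Fin n → ℝ)
    (h : fpl M x = q) :
    isLCPsol M q (fun i => max (-x i) 0) := by
  subst h
  rw [isLCPsol, mulVec_negPart_add_fpl]
  exact ⟨fun i => le_max_right _ _, fun i => le_max_right _ _,
    fun i => max_mul_max_neg_eq_zero (x i)⟩
end

section
/- If q lies in the complementary cone pos C_M(α) for some α ⊆ {1,…,n}, then the LCP (M,q) has at least one solution; if moreover C_M(α) is nonsingular, then the equation C_{−M}(α) x = q has a unique solution x in the orthant pos C_I(α). -/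
open Matrix

/-!
Write `q = C_M(α) p` with `p ≥ 0`. Splitting `p` into its parts `z` on `α` and `w` off `α`
gives `q = w - M z`, so `z` solves the LCP with slack `w = Mz + q`. Moreover
`C_{-M}(α) = C_M(α) D` for the involutive sign matrix `D = diag(±1)` (`-1` on `α`), so
`x = D p` lies in the orthant and solves `C_{-M}(α) x = q`; when `C_M(α)` is invertible so is
`C_{-M}(α)`, which gives uniqueness.
-/

section Complementary

variable {n : ℕ} (M : Matrix (Fin n) (Fin n) ℝ) (α : Finset (Fin n))

lemma compMat_mulVec_apply (p : Fin n → ℝ) (i : Fin n) :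
    (compMat M α *ᵥ p) i =
      (if i ∈ α then 0 else p i) - (M *ᵥ fun j => if j ∈ α then p j else 0) i := by
  have hterm : ∀ j, compMat M α i j * p j =
      (if i = j then (if j ∈ α then 0 else p j) else 0) - M i j * (if j ∈ α then p j else 0) := by
    intro j
    by_cases hj : j ∈ α <;> by_cases hij : i = j <;> simp [compMat, hj, hij]
  simp only [mulVec, dotProduct, hterm, Finset.sum_sub_distrib, Finset.sum_ite_eq,
    Finset.mem_univ, if_true]

lemma mulVec_add_compMat_mulVec (p : Fin n → ℝ) :
    (M *ᵥ fun j => if j ∈ α then p j else 0) + compMat M α *ᵥ p =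
      fun i => if i ∈ α then 0 else p i := by
  funext i
  rw [Pi.add_apply, compMat_mulVec_apply]
  ring

theorem exists_isLCPsol_of_mem_posCone {q : Fin n → ℝ} (hq : q ∈ posCone (compMat M α)) :
    ∃ z, isLCPsol M q z := by
  obtain ⟨p, hp, rfl⟩ := hq
  refine ⟨fun j => if j ∈ α then p j else 0, fun i => ?_, fun i => ?_, fun i => ?_⟩ <;>
    simp only [mulVec_add_compMat_mulVec] <;>
    by_cases hi : i ∈ α <;> simp [hi, hp i]

def signDiag : Matrix (Fin n) (Fin n) ℝ :=
  diagonal fun j => if j ∈ α then -1 else 1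

lemma signDiag_mul_self : signDiag α * signDiag α = 1 := by
  rw [signDiag, diagonal_mul_diagonal, ← diagonal_one]
  congr 1
  funext j
  by_cases hj : j ∈ α <;> simp [hj]

lemma isUnit_signDiag : IsUnit (signDiag α) :=
  ⟨⟨signDiag α, signDiag α, signDiag_mul_self α, signDiag_mul_self α⟩, rfl⟩

lemma compMat_neg : compMat (-M) α = compMat M α * signDiag α := by
  funext i j
  rw [signDiag, mul_diagonal]
  by_cases hj : j ∈ α <;> simp [compMat, hj]

lemma compMat_neg_mulVec_signDiag_mulVec (p : Fin n → ℝ) :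
    compMat (-M) α *ᵥ (signDiag α *ᵥ p) = compMat M α *ᵥ p := by
  rw [compMat_neg, mulVec_mulVec, Matrix.mul_assoc, signDiag_mul_self, Matrix.mul_one]

lemma signDiag_mulVec_mem_orthant {p : Fin n → ℝ} (hp : ∀ j, 0 ≤ p j) :
    signDiag α *ᵥ p ∈ orthant α := by
  intro j
  by_cases hj : j ∈ α <;> simp [signDiag, mulVec_diagonal, hj, hp j]

lemma isUnit_compMat_neg (hdet : (compMat M α).det ≠ 0) : IsUnit (compMat (-M) α) := by
  rw [compMat_neg]
  exact ((isUnit_iff_isUnit_det _).2 hdet.isUnit).mul (isUnit_signDiag α)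

end Complementary

theorem stmt_5 {n : ℕ} (M : Matrix (Fin n) (Fin n) ℝ) (q : Fin n → ℝ)
    (α : Finset (Fin n)) (hq : q ∈ posCone (compMat M α)) :
    (∃ z, isLCPsol M q z) ∧
    ((compMat M α).det ≠ 0 →
      ∃! x, x ∈ orthant α ∧ (compMat (-M) α).mulVec x = q) := by
  refine ⟨exists_isLCPsol_of_mem_posCone M α hq, fun hdet => ?_⟩
  obtain ⟨p, hp, rfl⟩ := hq
  have hinj := mulVec_injective_iff_isUnit.2 (isUnit_compMat_neg M α hdet)
  refine ⟨signDiag α *ᵥ p,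
    ⟨signDiag_mulVec_mem_orthant α hp, compMat_neg_mulVec_signDiag_mulVec M α p⟩, ?_⟩
  rintro x ⟨-, hx⟩
  exact hinj (hx.trans (compMat_neg_mulVec_signDiag_mulVec M α p).symm)
end

section
/- For M = [[1,2],[2,1]] and the path q̄_a(λ) = (1−λ)·(−4,0) + λ·(0,−4), λ ∈ [0,1]: the equation f_M(x) = q̄_a(λ) has exactly one solution for λ ∈ [0,1/3), exactly three solutions for λ ∈ (1/3, 2/3), and exactly one solution for λ ∈ (2/3, 1]. -/
open Matrix

/-!
On each of the four orthants `f_M` is linear, so `f_M x = q̄(λ)` reduces to one linear system per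
orthant, each with a unique solution in `ℝ²`; that solution counts exactly when it lies in its
orthant. The nonnegative orthant never contributes, the orthant `x₀ ≥ 0 ≥ x₁` contributes for
`λ ≥ 1/3`, the orthant `x₀ ≤ 0 ≤ x₁` for `λ ≤ 2/3`, and the nonpositive orthant for
`1/3 ≤ λ ≤ 2/3`; away from `λ = 1/3, 2/3` these solutions are distinct.
-/

lemma max_zero_cases (t : ℝ) :
    (0 ≤ t ∧ max t 0 = t ∧ max (-t) 0 = 0) ∨ (t ≤ 0 ∧ max t 0 = 0 ∧ max (-t) 0 = -t) := by
  rcases le_total 0 t with h | h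
  · exact Or.inl ⟨h, max_eq_left h, max_eq_right (neg_nonpos.mpr h)⟩
  · exact Or.inr ⟨h, max_eq_right h, max_eq_left (neg_nonneg.mpr h)⟩

lemma eq_vecTwo_iff {α : Type*} {a b : α} {x : Fin 2 → α} : x = ![a, b] ↔ x 0 = a ∧ x 1 = b := by
  simp [funext_iff, Fin.forall_fin_two]

lemma vecTwo_ne_of_fst_ne {α : Type*} {a b c d : α} (h : a ≠ c) : ![a, b] ≠ ![c, d] :=
  fun he => h (congrFun he 0)

lemma fpl_fin_two (a b c d : ℝ) (x : Fin 2 → ℝ) :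
    fpl !![a, b; c, d] x = ![max (x 0) 0 - (a * max (-x 0) 0 + b * max (-x 1) 0),
      max (x 1) 0 - (c * max (-x 0) 0 + d * max (-x 1) 0)] := by
  ext i
  fin_cases i <;> simp [fpl, mulVec, dotProduct, Fin.sum_univ_two]

lemma fpl_eq_path_iff (l : ℝ) (x : Fin 2 → ℝ) :
    fpl !![1, 2; 2, 1] x = ![4*l - 4, -4*l] ↔
      (1/3 ≤ l ∧ x = ![12*l - 4, -4*l]) ∨ (l ≤ 2/3 ∧ x = ![4*l - 4, 8 - 12*l]) ∨
        (1/3 ≤ l ∧ l ≤ 2/3 ∧ x = ![4/3 - 4*l, 4*l - 8/3]) := by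
  simp only [fpl_fin_two, vecCons_inj, eq_vecTwo_iff, and_true]
  rcases max_zero_cases (x 0) with ⟨p0, e0, f0⟩ | ⟨p0, e0, f0⟩ <;>
    rcases max_zero_cases (x 1) with ⟨p1, e1, f1⟩ | ⟨p1, e1, f1⟩ <;>
    rw [e0, f0, e1, f1] <;>
    refine ⟨fun ⟨h0, h1⟩ => ?_, by
      rintro (⟨hl, h0, h1⟩ | ⟨hl, h0, h1⟩ | ⟨hl, hl', h0, h1⟩) <;> constructor <;> linarith⟩
  · linarith
  · exact Or.inl ⟨by linarith, by linarith, by linarith⟩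
  · exact Or.inr <| Or.inl ⟨by linarith, by linarith, by linarith⟩
  · exact Or.inr <| Or.inr ⟨by linarith, by linarith, by linarith, by linarith⟩

lemma setOf_fpl_eq_path_of_lt {l : ℝ} (hl : l < 1/3) :
    {x : Fin 2 → ℝ | fpl !![1, 2; 2, 1] x = ![4*l - 4, -4*l]} = {![4*l - 4, 8 - 12*l]} := by
  have h₁ : ¬ 1/3 ≤ l := not_le.mpr hl
  have h₂ : l ≤ 2/3 := by linarith
  ext x
  simp only [Set.mem_ofPred_eq, Set.mem_singleton_iff, fpl_eq_path_iff, h₁, h₂, false_and, true_and,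
    false_or, or_false]

lemma setOf_fpl_eq_path_of_mem_Ioo {l : ℝ} (hl : l ∈ Set.Ioo (1/3 : ℝ) (2/3)) :
    {x : Fin 2 → ℝ | fpl !![1, 2; 2, 1] x = ![4*l - 4, -4*l]} =
      {![12*l - 4, -4*l], ![4*l - 4, 8 - 12*l], ![4/3 - 4*l, 4*l - 8/3]} := by
  have h₁ : 1/3 ≤ l := hl.1.le
  have h₂ : l ≤ 2/3 := hl.2.le
  ext x
  simp only [Set.mem_ofPred_eq, Set.mem_insert_iff, Set.mem_singleton_iff, fpl_eq_path_iff, h₁, h₂,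
    true_and]

lemma setOf_fpl_eq_path_of_gt {l : ℝ} (hl : 2/3 < l) :
    {x : Fin 2 → ℝ | fpl !![1, 2; 2, 1] x = ![4*l - 4, -4*l]} = {![12*l - 4, -4*l]} := by
  have h₁ : 1/3 ≤ l := by linarith
  have h₂ : ¬ l ≤ 2/3 := not_le.mpr hl
  ext x
  simp only [Set.mem_ofPred_eq, Set.mem_singleton_iff, fpl_eq_path_iff, h₁, h₂, false_and, true_and,
    or_false]

theorem stmt_8 (l : ℝ) :
    (l ∈ Set.Ico (0:ℝ) (1/3) →
      {x : Fin 2 → ℝ | fpl !![1, 2; 2, 1] x = ![4*l - 4, -4*l]}.encard = 1) ∧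
    (l ∈ Set.Ioo (1/3 : ℝ) (2/3) →
      {x : Fin 2 → ℝ | fpl !![1, 2; 2, 1] x = ![4*l - 4, -4*l]}.encard = 3) ∧
    (l ∈ Set.Ioc (2/3 : ℝ) 1 →
      {x : Fin 2 → ℝ | fpl !![1, 2; 2, 1] x = ![4*l - 4, -4*l]}.encard = 1) := by
  refine ⟨fun hl => ?_, fun hl => ?_, fun hl => ?_⟩
  · rw [setOf_fpl_eq_path_of_lt hl.2, Set.encard_singleton]
  · rw [setOf_fpl_eq_path_of_mem_Ioo hl, Set.encard_eq_three]
    exact ⟨_, _, _, vecTwo_ne_of_fst_ne (by intro h; linarith [hl.1]),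
      vecTwo_ne_of_fst_ne (by intro h; linarith [hl.1]),
      vecTwo_ne_of_fst_ne (by intro h; linarith [hl.2]), rfl⟩
  · rw [setOf_fpl_eq_path_of_gt hl.1, Set.encard_singleton]
end

section
/- For M = [[1,2],[2,1]] and the path q̄_b(λ) = (1−λ)·(−1,3) + λ·(3,−1), λ ∈ [0,1], the equation f_M(x) = q̄_b(λ) has exactly one solution for every λ ∈ [0,1]. -/
open Matrix

theorem stmt_9 (l : ℝ) (hl : l ∈ Set.Icc (0:ℝ) 1) :
    {x : Fin 2 → ℝ | fpl !![1, 2; 2, 1] x = ![4*l - 1, 3 - 4*l]}.encard = 1 := by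
  obtain ⟨h0, h1⟩ := hl
  rw [Set.encard_eq_one]
  use ![max (4*l-1) (12*l-7), max (3-4*l) (5-12*l)]
  ext x
  simp only [Set.mem_setOf_eq, Set.mem_singleton_iff, funext_iff, Fin.forall_fin_two]
  have key : ∀ p : Fin 2 → ℝ,
      (fpl !![1, 2; 2, 1] x 0 = p 0 ∧ fpl !![1, 2; 2, 1] x 1 = p 1) ↔
      (max (x 0) 0 - (max (-x 0) 0 + 2 * max (-x 1) 0) = p 0 ∧
       max (x 1) 0 - (2 * max (-x 0) 0 + max (-x 1) 0) = p 1) := by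
    intro p
    simp [fpl, Matrix.mulVec, dotProduct, Fin.sum_univ_two]
  rw [key ![4*l-1, 3-4*l]]
  simp only [Matrix.cons_val_zero, Matrix.cons_val_one, Matrix.head_cons]
  have hsa : max (x 0) 0 - max (-x 0) 0 = x 0 := max_zero_sub_max_neg_zero_eq_self (x 0)
  have hsb : max (x 1) 0 - max (-x 1) 0 = x 1 := max_zero_sub_max_neg_zero_eq_self (x 1)
  constructor
  · rintro ⟨e1, e2⟩
    have E1 : x 0 - 2 * max (-x 1) 0 = 4*l - 1 := by linarith
    have E2 : x 1 - 2 * max (-x 0) 0 = 3 - 4*l := by linarith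
    rcases max_cases (-x 0) 0 with ⟨hu, hu'⟩ | ⟨hu, hu'⟩ <;>
      rcases max_cases (-x 1) 0 with ⟨hv, hv'⟩ | ⟨hv, hv'⟩ <;> rw [hu] at E2 <;> rw [hv] at E1
    · exfalso; linarith
    · refine ⟨?_, ?_⟩
      · rw [max_eq_left (by linarith)]; linarith
      · rw [max_eq_right (by linarith)]; linarith
    · refine ⟨?_, ?_⟩
      · rw [max_eq_right (by linarith)]; linarith
      · rw [max_eq_left (by linarith)]; linarith
    · refine ⟨?_, ?_⟩
      · rw [max_eq_left (by linarith)]; linarith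
      · rw [max_eq_left (by linarith)]; linarith
  · rintro ⟨e1, e2⟩
    rw [e1, e2] at *
    rcases le_or_gt l (1/4) with hc | hc
    · rw [max_eq_left (by linarith : (12*l-7:ℝ) ≤ 4*l-1),
          max_eq_right (by linarith : (3-4*l:ℝ) ≤ 5-12*l)] at *
      rw [max_eq_right (by linarith : (4*l-1:ℝ) ≤ 0), max_eq_left (by linarith : (0:ℝ) ≤ -(4*l-1)),
          max_eq_left (by linarith : (0:ℝ) ≤ 5-12*l), max_eq_right (by linarith : -(5-12*l) ≤ (0:ℝ))]
      constructor <;> ring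
    · rcases le_or_gt l (3/4) with hd | hd
      · rw [max_eq_left (by linarith : (12*l-7:ℝ) ≤ 4*l-1),
            max_eq_left (by linarith : (5-12*l:ℝ) ≤ 3-4*l)] at *
        rw [max_eq_left (by linarith : (0:ℝ) ≤ 4*l-1), max_eq_right (by linarith : -(4*l-1) ≤ (0:ℝ)),
            max_eq_left (by linarith : (0:ℝ) ≤ 3-4*l), max_eq_right (by linarith : -(3-4*l) ≤ (0:ℝ))]
        constructor <;> ring
      · rw [max_eq_right (by linarith : (4*l-1:ℝ) ≤ 12*l-7),
            max_eq_left (by linarith : (5-12*l:ℝ) ≤ 3-4*l)] at *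
        rw [max_eq_left (by linarith : (0:ℝ) ≤ 12*l-7), max_eq_right (by linarith : -(12*l-7) ≤ (0:ℝ)),
            max_eq_right (by linarith : (3-4*l:ℝ) ≤ 0), max_eq_left (by linarith : (0:ℝ) ≤ -(3-4*l))]
        constructor <;> ring
end

section
/- For M = [[1,1],[1,1]] and the path q̄(λ) = (1−λ)·(−4,0) + λ·(0,−4): for λ = 1/2 the solution set of f_M(x) = q̄(λ) contains the continuum {(μ, −2−μ) : μ ∈ [−2,0]}, while for each λ ∈ [0,1/2) ∪ (1/2,1] the restriction of f_M(x) = q̄(λ) to the orthant pos C_I({1,2}) (i.e., x ≤ 0) has no solution. -/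
open Matrix

theorem fpl_of_nonpos {n : ℕ} (M : Matrix (Fin n) (Fin n) ℝ) {x : Fin n → ℝ}
    (hx : ∀ i, x i ≤ 0) : fpl M x = M *ᵥ x := by
  have hneg : (fun j => max (-x j) 0) = -x := funext fun j => max_eq_left (neg_nonneg.2 (hx j))
  funext i
  simp only [fpl, max_eq_right (hx i), hneg, mulVec_neg, Pi.neg_apply, zero_sub, neg_neg]

theorem mulVec_ones_two (x : Fin 2 → ℝ) :
    (!![1, 1; 1, 1] : Matrix (Fin 2) (Fin 2) ℝ) *ᵥ x = fun _ => x 0 + x 1 := by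
  funext i
  fin_cases i <;> simp [mulVec, dotProduct, Fin.sum_univ_two]

theorem stmt_10 :
    (∀ μ ∈ Set.Icc (-2:ℝ) 0,
      fpl !![1, 1; 1, 1] ![μ, -2 - μ] = ![4*(1/2 : ℝ) - 4, -4*(1/2 : ℝ)]) ∧
    (∀ l : ℝ, l ∈ Set.Ico (0:ℝ) (1/2) ∪ Set.Ioc (1/2 : ℝ) 1 →
      ¬ ∃ x : Fin 2 → ℝ, (∀ i, x i ≤ 0) ∧
        (!![1, 1; 1, 1] : Matrix (Fin 2) (Fin 2) ℝ).mulVec x = ![4*l - 4, -4*l]) := by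
  constructor
  · rintro μ ⟨hlo, hhi⟩
    have hx : ∀ i, ![μ, -2 - μ] i ≤ 0 := by
      intro i
      fin_cases i <;> simp <;> linarith
    rw [fpl_of_nonpos _ hx, mulVec_ones_two]
    funext i
    fin_cases i <;> norm_num
  · rintro l hl ⟨x, -, hMx⟩
    rw [mulVec_ones_two] at hMx
    have hdiag : 4 * l - 4 = -4 * l := by
      simpa using (congrFun hMx 0).symm.trans (congrFun hMx 1)
    have hl_half : l = 1 / 2 := by linarith
    rcases hl with ⟨-, h⟩ | ⟨h, -⟩ <;> linarith
end

section
/- If M and N are LCP equivalent via homeomorphisms φ, ψ with f_M = φ ∘ f_N ∘ ψ, then for every α ⊆ {1,…,n} there exists β ⊆ {1,…,n} such that φ⁻¹(pos C_M(α)) = pos C_N(β); moreover α ↦ β is a bijection of the power set of {1,…,n}. In particular, φ⁻¹ induces a bijection from the collection of complementary cones of M onto the collection of complementary cones of N. -/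
open Matrix

/-- The field of sets generated by the orthants (being finitely generated,
it coincides with the generated σ-algebra). -/
def orthField (n : ℕ) : MeasurableSpace (Fin n → ℝ) :=
  MeasurableSpace.generateFrom {S | ∃ α : Finset (Fin n), S = orthant α}

/-- `ψ` induces a Boolean automorphism `P ↦ ψ⁻¹(P)` of the field generated by the orthants. -/
def inducesBoolAuto {n : ℕ} (ψ : (Fin n → ℝ) ≃ₜ (Fin n → ℝ)) : Prop :=
  ∀ P : Set (Fin n → ℝ),
    @MeasurableSet _ (orthField n) P ↔ @MeasurableSet _ (orthField n) (⇑ψ ⁻¹' P)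

/-- LCP equivalence: `f_M = φ ∘ f_N ∘ ψ` for homeomorphisms `φ, ψ`, with `ψ`
inducing a Boolean automorphism on the field generated by the orthants. -/
def LCPequiv {n : ℕ} (M N : Matrix (Fin n) (Fin n) ℝ) : Prop :=
  ∃ (φ ψ : (Fin n → ℝ) ≃ₜ (Fin n → ℝ)),
    inducesBoolAuto ψ ∧ fpl M = ⇑φ ∘ fpl N ∘ ⇑ψ

-- ============ auxiliary development ============
namespace Stmt12

variable {n : ℕ}

/-- The sign-pattern cell. -/
def cell (s : Fin n → SignType) : Set (Fin n → ℝ) :=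
  {x | ∀ j, SignType.sign (x j) = s j}

noncomputable def sgn (x : Fin n → ℝ) : Fin n → SignType := fun j => SignType.sign (x j)

lemma mem_cell_sgn (x : Fin n → ℝ) : x ∈ cell (sgn x) := fun _ => rfl

/-- A set is sign-invariant. -/
def signInv (P : Set (Fin n → ℝ)) : Prop := ∀ x ∈ P, cell (sgn x) ⊆ P

lemma sgn_eq_of_mem_cell {s : Fin n → SignType} {x : Fin n → ℝ} (hx : x ∈ cell s) :
    sgn x = s := funext fun j => hx j

lemma signInv_orthant (α : Finset (Fin n)) : signInv (orthant α) := by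
  intro x hx y hy j
  have hs : SignType.sign (y j) = SignType.sign (x j) := hy j
  have hxj := hx j
  by_cases hj : j ∈ α <;> simp only [hj, if_true, if_false] at hxj ⊢
  · rcases lt_trichotomy (y j) 0 with h' | h' | h'
    · exact le_of_lt h'
    · exact le_of_eq h'
    · exfalso
      have h1 : SignType.sign (y j) = 1 := sign_eq_one_iff.mpr h'
      rw [hs] at h1
      have := sign_eq_one_iff.mp h1
      linarith
  · rcases lt_trichotomy (y j) 0 with h' | h' | h'
    · exfalso
      have h1 : SignType.sign (y j) = -1 := sign_eq_neg_one_iff.mpr h'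
      rw [hs] at h1
      have := sign_eq_neg_one_iff.mp h1
      linarith
    · exact le_of_eq h'.symm
    · exact le_of_lt h'

lemma signInv_of_meas {P : Set (Fin n → ℝ)} (h : @MeasurableSet _ (orthField n) P) :
    signInv P := by
  refine MeasurableSpace.generateFrom_induction
    {S | ∃ α : Finset (Fin n), S = orthant α} (fun S _ => signInv S) ?_ ?_ ?_ ?_ P h
  · rintro t ⟨α, rfl⟩ _
    exact signInv_orthant α
  · intro x hx; exact absurd hx (Set.notMem_empty x)
  · intro t _ ht x hx y hy hyP
    have hsy : sgn y = sgn x := sgn_eq_of_mem_cell hy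
    have : x ∈ cell (sgn y) := by rw [hsy]; exact mem_cell_sgn x
    exact hx (ht y hyP this)
  · intro f _ hf x hx y hy
    obtain ⟨i, hi⟩ := Set.mem_iUnion.mp hx
    exact Set.mem_iUnion.mpr ⟨i, hf i x hi hy⟩

lemma meas_orthant (α : Finset (Fin n)) : @MeasurableSet _ (orthField n) (orthant α) :=
  MeasurableSpace.measurableSet_generateFrom ⟨α, rfl⟩

open scoped Classical in
lemma meas_le_zero (j : Fin n) : @MeasurableSet _ (orthField n) {x : Fin n → ℝ | x j ≤ 0} := by
  have : {x : Fin n → ℝ | x j ≤ 0}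
      = ⋃ (α : Finset (Fin n)) (_ : j ∈ α), orthant α := by
    ext x
    simp only [Set.mem_setOf_eq, Set.mem_iUnion]
    constructor
    · intro hx
      refine ⟨Finset.univ.filter (fun k => x k ≤ 0), by simp [hx], fun k => ?_⟩
      by_cases hk : k ∈ Finset.univ.filter (fun k => x k ≤ 0) <;>
        simp_all [Finset.mem_filter, le_of_not_ge]
    · rintro ⟨α, hj, hx⟩
      have := hx j
      simpa [hj] using this
  rw [this]
  exact MeasurableSet.biUnion (Set.to_countable _) (fun α _ => meas_orthant α)

open scoped Classical in
lemma meas_ge_zero (j : Fin n) : @MeasurableSet _ (orthField n) {x : Fin n → ℝ | 0 ≤ x j} := by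
  have : {x : Fin n → ℝ | 0 ≤ x j}
      = ⋃ (α : Finset (Fin n)) (_ : j ∉ α), orthant α := by
    ext x
    simp only [Set.mem_setOf_eq, Set.mem_iUnion]
    constructor
    · intro hx
      refine ⟨Finset.univ.filter (fun k => x k < 0), by simp [not_lt.mpr hx], fun k => ?_⟩
      by_cases hk : k ∈ Finset.univ.filter (fun k => x k < 0) <;>
        simp_all [Finset.mem_filter, le_of_lt, le_of_not_gt]
    · rintro ⟨α, hj, hx⟩
      have := hx j
      simpa [hj] using this
  rw [this]
  exact MeasurableSet.biUnion (Set.to_countable _) (fun α _ => meas_orthant α)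

lemma meas_sign_eq (j : Fin n) (v : SignType) :
    @MeasurableSet _ (orthField n) {x : Fin n → ℝ | SignType.sign (x j) = v} := by
  cases v
  · have : {x : Fin n → ℝ | SignType.sign (x j) = SignType.zero}
        = {x : Fin n → ℝ | x j ≤ 0} ∩ {x : Fin n → ℝ | 0 ≤ x j} := by
      ext x
      simp only [Set.mem_inter_iff, Set.mem_setOf_eq]
      constructor
      · intro hx
        have := sign_eq_zero_iff.mp hx
        constructor <;> simp [this]
      · intro ⟨h1, h2⟩
        exact sign_eq_zero_iff.mpr (le_antisymm h1 h2)
    rw [this]; exact (meas_le_zero j).inter (meas_ge_zero j)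
  · have : {x : Fin n → ℝ | SignType.sign (x j) = SignType.neg}
        = {x : Fin n → ℝ | 0 ≤ x j}ᶜ := by
      ext x
      simp only [Set.mem_compl_iff, Set.mem_setOf_eq, not_le]
      exact sign_eq_neg_one_iff
    rw [this]; exact (meas_ge_zero j).compl
  · have : {x : Fin n → ℝ | SignType.sign (x j) = SignType.pos}
        = {x : Fin n → ℝ | x j ≤ 0}ᶜ := by
      ext x
      simp only [Set.mem_compl_iff, Set.mem_setOf_eq, not_le]
      exact sign_eq_one_iff
    rw [this]; exact (meas_le_zero j).compl

lemma meas_cell (s : Fin n → SignType) : @MeasurableSet _ (orthField n) (cell s) := by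
  have : cell s = ⋂ j, {x : Fin n → ℝ | SignType.sign (x j) = s j} := by
    ext x; simp [cell, Set.mem_iInter]
  rw [this]
  exact MeasurableSet.iInter (fun j => meas_sign_eq j (s j))

lemma meas_of_signInv {P : Set (Fin n → ℝ)} (h : signInv P) :
    @MeasurableSet _ (orthField n) P := by
  have : P = ⋃ (s : Fin n → SignType) (_ : cell s ⊆ P), cell s := by
    ext x
    simp only [Set.mem_iUnion]
    constructor
    · intro hx
      exact ⟨sgn x, h x hx, mem_cell_sgn x⟩
    · rintro ⟨s, hs, hx⟩
      exact hs hx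
  rw [this]
  exact MeasurableSet.iUnion fun s => MeasurableSet.iUnion fun _ => meas_cell s

/-- open orthant as a cell -/
def osign (α : Finset (Fin n)) : Fin n → SignType := fun j => if j ∈ α then -1 else 1

def ocell (α : Finset (Fin n)) : Set (Fin n → ℝ) := cell (osign α)

lemma mem_ocell_iff {α : Finset (Fin n)} {x : Fin n → ℝ} :
    x ∈ ocell α ↔ ∀ j, if j ∈ α then x j < 0 else 0 < x j := by
  unfold ocell cell osign
  constructor
  · intro hx j
    have := hx j
    by_cases hj : j ∈ α <;> simp only [hj, if_true, if_false] at this ⊢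
    · exact sign_eq_neg_one_iff.mp this
    · exact sign_eq_one_iff.mp this
  · intro hx j
    have := hx j
    by_cases hj : j ∈ α <;> simp only [hj, if_true, if_false] at this ⊢
    · exact sign_eq_neg_one_iff.mpr this
    · exact sign_eq_one_iff.mpr this

lemma ocell_nonempty (α : Finset (Fin n)) : (ocell α).Nonempty := by
  refine ⟨fun j => if j ∈ α then -1 else 1, mem_ocell_iff.mpr fun j => ?_⟩
  by_cases hj : j ∈ α <;> simp [hj]

lemma isOpen_ocell (α : Finset (Fin n)) : IsOpen (ocell α) := by
  have : ocell α = ⋂ j, (if j ∈ α then {x : Fin n → ℝ | x j < 0} else {x : Fin n → ℝ | 0 < x j}) := by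
    ext x
    rw [mem_ocell_iff, Set.mem_iInter]
    constructor <;> intro hx j <;> have := hx j <;> by_cases hj : j ∈ α <;>
      simp only [hj, if_true, if_false] at this ⊢ <;> exact this
  rw [this]
  refine isOpen_iInter_of_finite fun j => ?_
  by_cases hj : j ∈ α <;> simp only [hj, if_true, if_false]
  · exact isOpen_lt (continuous_apply j) continuous_const
  · exact isOpen_lt continuous_const (continuous_apply j)

lemma isClosed_orthant (α : Finset (Fin n)) : IsClosed (orthant α) := by
  have : orthant α = ⋂ j, (if j ∈ α then {x : Fin n → ℝ | x j ≤ 0} else {x : Fin n → ℝ | 0 ≤ x j}) := by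
    ext x
    simp only [orthant, Set.mem_setOf_eq, Set.mem_iInter]
    constructor <;> intro hx j <;> have := hx j <;> by_cases hj : j ∈ α <;>
      simp only [hj, if_true, if_false] at this ⊢ <;> exact this
  rw [this]
  refine isClosed_iInter fun j => ?_
  by_cases hj : j ∈ α <;> simp only [hj, if_true, if_false]
  · exact isClosed_le (continuous_apply j) continuous_const
  · exact isClosed_le continuous_const (continuous_apply j)

lemma ocell_subset_orthant (α : Finset (Fin n)) : ocell α ⊆ orthant α := by
  intro x hx j
  have := mem_ocell_iff.mp hx j
  by_cases hj : j ∈ α <;> simp only [hj, if_true, if_false] at this ⊢ <;> linarith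

lemma closure_ocell (α : Finset (Fin n)) : closure (ocell α) = orthant α := by
  apply le_antisymm
  · exact closure_minimal (ocell_subset_orthant α) (isClosed_orthant α)
  · intro x hx
    set d : Fin n → ℝ := fun j => if j ∈ α then -1 else 1 with hd
    have htend : Filter.Tendsto (fun ε : ℝ => x + ε • d) (nhdsWithin 0 (Set.Ioi 0)) (nhds x) := by
      have : Filter.Tendsto (fun ε : ℝ => x + ε • d) (nhds 0) (nhds (x + (0:ℝ) • d)) := by
        exact Filter.Tendsto.add tendsto_const_nhds (Filter.Tendsto.smul Filter.tendsto_id tendsto_const_nhds)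
      simpa using this.mono_left nhdsWithin_le_nhds
    refine mem_closure_of_tendsto htend ?_
    filter_upwards [self_mem_nhdsWithin] with ε (hε : ε ∈ Set.Ioi 0)
    rw [Set.mem_Ioi] at hε
    refine mem_ocell_iff.mpr fun j => ?_
    have hxj := hx j
    by_cases hj : j ∈ α <;> simp only [hj, if_true, if_false, hd] at hxj ⊢ <;>
      simp only [Pi.add_apply, Pi.smul_apply, smul_eq_mul, hj, if_true, if_false] <;> nlinarith

lemma orthant_subset_imp (α β : Finset (Fin n)) (h : orthant α ⊆ orthant β) : α ⊆ β := by
  intro j hj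
  by_contra hjβ
  have hx : (fun k => if k = j then (-1:ℝ) else 0) ∈ orthant α := by
    intro k
    by_cases hk : k ∈ α <;> simp only [hk, if_true, if_false]
    · by_cases hkj : k = j <;> simp [hkj]
    · have : k ≠ j := fun hkj => hk (hkj ▸ hj)
      simp [this]
  have := h hx j
  simp [hjβ] at this
  linarith

lemma orthant_inj {α β : Finset (Fin n)} (h : orthant α = orthant β) : α = β :=
  le_antisymm (orthant_subset_imp α β h.le) (orthant_subset_imp β α h.ge)

/-- A nonempty measurable subset of an open orthant equals the open orthant. -/
lemma eq_ocell_of_subset {α : Finset (Fin n)} {A : Set (Fin n → ℝ)}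
    (hA : @MeasurableSet _ (orthField n) A) (hne : A.Nonempty) (hsub : A ⊆ ocell α) :
    A = ocell α := by
  obtain ⟨z, hz⟩ := hne
  have hzα : z ∈ ocell α := hsub hz
  have h1 : sgn z = osign α := sgn_eq_of_mem_cell hzα
  have h2 : cell (sgn z) ⊆ A := signInv_of_meas hA z hz
  rw [h1] at h2
  exact le_antisymm hsub h2

set_option maxHeartbeats 1000000 in
/-- Key lemma: the inverse image map of a boolean-automorphism-inducing
homeomorphism sends open orthants to open orthants. -/
lemma key_ocell (χ : (Fin n → ℝ) ≃ₜ (Fin n → ℝ)) (hχ : inducesBoolAuto χ)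
    (α : Finset (Fin n)) :
    ∃ β : Finset (Fin n), ⇑χ.symm ⁻¹' ocell α = ocell β := by
  classical
  have hcomp1 : ∀ S : Set (Fin n → ℝ), ⇑χ ⁻¹' (⇑χ.symm ⁻¹' S) = S := by
    intro S; ext x; simp
  have hcomp2 : ∀ S : Set (Fin n → ℝ), ⇑χ.symm ⁻¹' (⇑χ ⁻¹' S) = S := by
    intro S; ext x; simp
  have hUmeas : @MeasurableSet _ (orthField n) (⇑χ.symm ⁻¹' ocell α) := by
    refine (hχ _).mpr ?_
    rw [hcomp1]
    exact meas_cell _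
  have hUopen : IsOpen (⇑χ.symm ⁻¹' ocell α) := (isOpen_ocell α).preimage χ.symm.continuous
  obtain ⟨y0, hy0⟩ := ocell_nonempty α
  have hy0' : χ y0 ∈ ⇑χ.symm ⁻¹' ocell α := by
    simp only [Set.mem_preimage, Homeomorph.symm_apply_apply]
    exact hy0
  obtain ⟨y, hy⟩ : (⇑χ.symm ⁻¹' ocell α).Nonempty := ⟨χ y0, hy0'⟩
  have hcellU : cell (sgn y) ⊆ ⇑χ.symm ⁻¹' ocell α := signInv_of_meas hUmeas y hy
  have hpull : ⇑χ ⁻¹' cell (sgn y) ⊆ ocell α := by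
    intro x hxc
    have h2 : χ.symm (χ x) ∈ ocell α := hcellU hxc
    simpa using h2
  have hpmeas : @MeasurableSet _ (orthField n) (⇑χ ⁻¹' cell (sgn y)) :=
    (hχ _).mp (meas_cell _)
  have hpne : (⇑χ ⁻¹' cell (sgn y)).Nonempty := by
    refine ⟨χ.symm y, ?_⟩
    simp only [Set.mem_preimage, Homeomorph.apply_symm_apply]
    exact mem_cell_sgn y
  have heq : ⇑χ ⁻¹' cell (sgn y) = ocell α := eq_ocell_of_subset hpmeas hpne hpull
  have hUeq : ⇑χ.symm ⁻¹' ocell α = cell (sgn y) := by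
    rw [← heq, hcomp2]
  have hnz : ∀ j, sgn y j ≠ 0 := by
    intro j hj0
    have hyj : y j = 0 := sign_eq_zero_iff.mp hj0
    have htend : Filter.Tendsto (fun c : ℝ => y + Pi.single j c)
        (nhdsWithin 0 (Set.Ioi 0)) (nhds y) := by
      have hcont : Continuous (fun c : ℝ => Pi.single j c : ℝ → (Fin n → ℝ)) := by
        apply continuous_pi
        intro k
        by_cases hk : k = j
        · subst hk
          simp only [Pi.single_eq_same]
          exact continuous_id
        · simp only [Pi.single_eq_of_ne hk]
          exact continuous_const
      have h1 : Filter.Tendsto (fun c : ℝ => y + Pi.single j c) (nhds 0)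
          (nhds (y + Pi.single j (0:ℝ))) :=
        Filter.Tendsto.add tendsto_const_nhds (hcont.tendsto 0)
      simpa using h1.mono_left nhdsWithin_le_nhds
    have hev : ∀ᶠ c : ℝ in nhdsWithin 0 (Set.Ioi 0),
        y + Pi.single j c ∈ ⇑χ.symm ⁻¹' ocell α :=
      htend.eventually (hUopen.mem_nhds hy)
    obtain ⟨c, hcU, hc⟩ :=
      (hev.and eventually_mem_nhdsWithin).exists
    rw [Set.mem_Ioi] at hc
    rw [hUeq] at hcU
    have hcj := hcU j
    simp only [Pi.add_apply, Pi.single_eq_same, hyj, zero_add] at hcj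
    rw [sign_eq_one_iff.mpr hc, hj0] at hcj
    exact absurd hcj (by decide)
  refine ⟨Finset.univ.filter (fun j => sgn y j = -1), ?_⟩
  rw [hUeq]
  have hsgn : sgn y = osign (Finset.univ.filter (fun j => sgn y j = -1)) := by
    funext j
    unfold osign
    by_cases hj : sgn y j = -1
    · simp [hj]
    · have h1 : sgn y j = 1 := by
        cases hsy : sgn y j
        · exact absurd hsy (hnz j)
        · exact absurd hsy hj
        · rfl
      simp [hj, h1]
  exact congrArg cell hsgn

lemma key_orthant (χ : (Fin n → ℝ) ≃ₜ (Fin n → ℝ)) (hχ : inducesBoolAuto χ)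
    (α : Finset (Fin n)) :
    ∃ β : Finset (Fin n), ⇑χ.symm ⁻¹' orthant α = orthant β := by
  obtain ⟨β, hβ⟩ := key_ocell χ hχ α
  refine ⟨β, ?_⟩
  rw [← closure_ocell α, χ.symm.preimage_closure, hβ, closure_ocell]

end Stmt12

namespace Stmt12

variable {n : ℕ}

lemma fpl_eq_mulVec (M : Matrix (Fin n) (Fin n) ℝ) {α : Finset (Fin n)}
    {x : Fin n → ℝ} (hx : x ∈ orthant α) :
    fpl M x = (compMat M α).mulVec (fun j => if j ∈ α then -x j else x j) := by
  classical
  funext i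
  have h1 : max (x i) 0 = if i ∈ α then 0 else x i := by
    have := hx i
    by_cases hi : i ∈ α <;> simp only [hi, if_true, if_false] at this ⊢
    · exact max_eq_right this
    · exact max_eq_left this
  have h2 : (fun j => max (-x j) 0) = fun j => if j ∈ α then -x j else 0 := by
    funext j
    have := hx j
    by_cases hj : j ∈ α <;> simp only [hj, if_true, if_false] at this ⊢
    · exact max_eq_left (by linarith)
    · exact max_eq_right (by linarith)
  have key : ∀ j, (if j ∈ α then -M i j else if i = j then (1:ℝ) else 0) *
      (if j ∈ α then -x j else x j)
      = (if j ∈ α then 0 else if i = j then x j else 0)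
        - M i j * (if j ∈ α then -x j else 0) := by
    intro j
    by_cases hj : j ∈ α <;> by_cases hij : i = j <;> simp [hj, hij] <;> ring
  show max (x i) 0 - M.mulVec (fun j => max (-x j) 0) i = _
  simp only [Matrix.mulVec, dotProduct, compMat, h1, h2]
  rw [Finset.sum_congr rfl (fun j _ => key j), Finset.sum_sub_distrib]
  have h3 : (∑ j, (if j ∈ α then (0:ℝ) else if i = j then x j else 0))
      = if i ∈ α then 0 else x i := by
    have : ∀ j, (if j ∈ α then (0:ℝ) else if i = j then x j else 0)
        = if i = j then (if j ∈ α then 0 else x j) else 0 := by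
      intro j
      by_cases hj : j ∈ α <;> by_cases hij : i = j <;> simp [hj, hij]
    rw [Finset.sum_congr rfl (fun j _ => this j), Finset.sum_ite_eq]
    simp
  rw [h3]
  congr 1
  exact Finset.sum_congr rfl fun j _ => by rw [congrFun h2 j]

lemma fpl_image (M : Matrix (Fin n) (Fin n) ℝ) (α : Finset (Fin n)) :
    fpl M '' orthant α = posCone (compMat M α) := by
  classical
  ext q
  constructor
  · rintro ⟨x, hx, rfl⟩
    refine ⟨fun j => if j ∈ α then -x j else x j, fun j => ?_, fpl_eq_mulVec M hx⟩
    have := hx j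
    by_cases hj : j ∈ α <;> simp only [hj, if_true, if_false] at this ⊢ <;> linarith
  · rintro ⟨p, hp, rfl⟩
    refine ⟨fun j => if j ∈ α then -p j else p j, fun j => ?_, ?_⟩
    · have := hp j
      by_cases hj : j ∈ α <;> simp only [hj, if_true, if_false] <;> linarith
    · have hx : (fun j => if j ∈ α then -p j else p j) ∈ orthant α := by
        intro j
        have := hp j
        by_cases hj : j ∈ α <;> simp only [hj, if_true, if_false] <;> linarith
      have hpe : (fun j : Fin n => if j ∈ α then -(if j ∈ α then -p j else p j)
          else if j ∈ α then -p j else p j) = p := by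
        funext j
        by_cases hj : j ∈ α <;> simp [hj]
      rw [fpl_eq_mulVec M hx]
      exact congrArg (compMat M α).mulVec hpe

end Stmt12


open Stmt12

theorem stmt_12 {n : ℕ} (M N : Matrix (Fin n) (Fin n) ℝ)
    (φ ψ : (Fin n → ℝ) ≃ₜ (Fin n → ℝ)) (hψ : inducesBoolAuto ψ)
    (h : fpl M = ⇑φ ∘ fpl N ∘ ⇑ψ) :
    ∃ e : Finset (Fin n) ≃ Finset (Fin n),
      ∀ α : Finset (Fin n), ⇑φ ⁻¹' posCone (compMat M α) = posCone (compMat N (e α)) := by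
  classical
  choose b hb using fun α => key_orthant ψ hψ α
  -- ψ.symm also induces a Boolean automorphism
  have hψ' : inducesBoolAuto ψ.symm := by
    intro P
    have hc : ⇑ψ ⁻¹' (⇑ψ.symm ⁻¹' P) = P := by ext x; simp
    constructor
    · intro hP
      exact (hψ _).mpr (by rwa [hc])
    · intro hP
      have := (hψ _).mp hP
      rwa [hc] at this
  have hinj : Function.Injective b := by
    intro α₁ α₂ hbe
    have h1 : ⇑ψ.symm ⁻¹' orthant α₁ = ⇑ψ.symm ⁻¹' orthant α₂ := by
      rw [hb α₁, hb α₂, hbe]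
    have h2 : orthant α₁ = orthant α₂ := by
      have := congrArg (fun S => ⇑ψ ⁻¹' S) h1
      simpa [Set.preimage_preimage] using this
    exact orthant_inj h2
  have hsurj : Function.Surjective b := by
    intro β
    obtain ⟨α, hα⟩ := key_orthant ψ.symm hψ' β
    rw [Homeomorph.symm_symm] at hα
    refine ⟨α, ?_⟩
    apply orthant_inj
    rw [← hb α, ← hα]
    ext x; simp
  refine ⟨Equiv.ofBijective b ⟨hinj, hsurj⟩, fun α => ?_⟩
  have h1 : posCone (compMat M α) = fpl M '' orthant α := (fpl_image M α).symm
  have h2 : ⇑φ ⁻¹' posCone (compMat M α) = (fpl N ∘ ⇑ψ) '' orthant α := by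
    rw [h1, h, Set.image_comp]
    exact Set.preimage_image_eq _ φ.injective
  rw [h2, Set.image_comp]
  have h3 : ⇑ψ '' orthant α = orthant (b α) := by
    rw [← hb α]
    ext x
    simp only [Set.mem_image, Set.mem_preimage]
    constructor
    · rintro ⟨y, hy, rfl⟩
      simpa using hy
    · intro hx
      exact ⟨ψ.symm x, hx, by simp⟩
  rw [h3, fpl_image]
  rfl
end

section
/- If M ∈ ℝ^{2×2} has det(M_{αα}) = 0 for some α ⊆ {1,2} (i.e., a vanishing principal minor: M₁₁ = 0, M₂₂ = 0, or det M = 0), then M is not LCP stable: in every neighborhood of M there is a matrix not LCP equivalent to M. -/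
open Matrix

/-! On the orthant `α` the map `f_M` is the linear map `C_{-M}(α)`, whose determinant is the
principal minor `det M_{αα}`. If that minor vanishes, `f_M` is constant along a kernel segment
inside the orthant, so `f_M` has an infinite fibre; if all principal minors are nonzero, each
orthant contributes at most one point to a fibre, so all fibres of `f_M` are finite. LCP
equivalence maps fibres injectively into fibres, and `M + t • 1` has nonzero principal minors
for all but finitely many `t`. -/

namespace Matrix

lemma finite_setOf_det_add_smul_one_eq_zero {ι K : Type*} [Fintype ι] [DecidableEq ι] [Field K]
    (M : Matrix ι ι K) : {t : K | (M + t • 1).det = 0}.Finite := by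
  refine (Polynomial.finite_setOfPred_isRoot (-M).charpoly_monic.ne_zero).subset fun t ht => ?_
  simpa [eval_charpoly, add_comm, smul_one_eq_diagonal] using ht

end Matrix

variable {n : ℕ}

lemma mem_orthant_filter_neg (x : Fin n → ℝ) : x ∈ orthant {j | x j < 0} := by
  intro j
  by_cases hj : x j < 0
  · simp [hj, hj.le]
  · simpa [hj] using not_lt.1 hj

lemma fpl_eq_mulVec_compMat {M : Matrix (Fin n) (Fin n) ℝ} {α : Finset (Fin n)}
    {x : Fin n → ℝ} (hx : x ∈ orthant α) : fpl M x = compMat (-M) α *ᵥ x := by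
  ext i
  have hsum : fpl M x i = ∑ j, ((if i = j then max (x i) 0 else 0) - M i j * max (-x j) 0) := by
    simp [fpl, mulVec, dotProduct, Finset.sum_sub_distrib]
  rw [hsum]
  refine Finset.sum_congr rfl fun j _ => ?_
  have hj := hx j
  by_cases hjα : j ∈ α <;> simp only [hjα, if_true, if_false] at hj <;>
    by_cases hij : i = j <;> simp [compMat, hjα, hij, hj]

lemma finite_setOf_fpl_eq {N : Matrix (Fin n) (Fin n) ℝ} (hN : ∀ α, (compMat (-N) α).det ≠ 0)
    (q : Fin n → ℝ) : {x | fpl N x = q}.Finite := by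
  have hcover : {x | fpl N x = q} ⊆ ⋃ α, (compMat (-N) α *ᵥ ·) ⁻¹' {q} := fun x hx =>
    Set.mem_iUnion.2 ⟨_, (fpl_eq_mulVec_compMat (mem_orthant_filter_neg x)).symm.trans hx⟩
  refine (Set.finite_iUnion fun α => ?_).subset hcover
  have hinj := mulVec_injective_iff_isUnit.2 ((isUnit_iff_isUnit_det _).2 (hN α).isUnit)
  exact (Set.subsingleton_singleton.preimage hinj).finite

lemma exists_infinite_setOf_fpl_eq {M : Matrix (Fin n) (Fin n) ℝ} {α : Finset (Fin n)}
    (hα : (compMat (-M) α).det = 0) : ∃ q, {x | fpl M x = q}.Infinite := by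
  obtain ⟨v, hv, hAv⟩ := exists_mulVec_eq_zero_iff.2 hα
  set x₀ : Fin n → ℝ := fun j => if j ∈ α then -(1 + |v j|) else 1 + |v j|
  refine ⟨compMat (-M) α *ᵥ x₀, Set.infinite_of_injOn_mapsTo (f := fun t : ℝ => x₀ + t • v)
    (fun s _ t _ hst => smul_left_injective ℝ hv (add_left_cancel hst)) (fun t ht => ?_)
    (Set.Icc_infinite zero_lt_one)⟩
  have hmem : x₀ + t • v ∈ orthant α := by
    intro j
    have : |t * v j| ≤ |v j| := by
      rw [abs_mul, abs_of_nonneg ht.1]; exact mul_le_of_le_one_left (abs_nonneg _) ht.2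
    by_cases hj : j ∈ α <;> simp [x₀, hj] <;> linarith [abs_le.1 this]
  simp [fpl_eq_mulVec_compMat hmem, mulVec_add, mulVec_smul, hAv]

lemma LCPequiv.exists_infinite_setOf_fpl_eq {M N : Matrix (Fin n) (Fin n) ℝ} (h : LCPequiv M N)
    (hM : ∃ q, {x | fpl M x = q}.Infinite) : ∃ q, {y | fpl N y = q}.Infinite := by
  obtain ⟨φ, ψ, -, hMN⟩ := h
  obtain ⟨q, hq⟩ := hM
  refine ⟨φ.symm q, Set.infinite_of_injOn_mapsTo ψ.injective.injOn (fun x hx => ?_) hq⟩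
  rw [Set.mem_ofPred_eq, ← hx.out, hMN, Function.comp_apply, Homeomorph.symm_apply_apply]
  rfl

lemma forall_det_compMat_neg_ne_zero_iff (M : Matrix (Fin 2) (Fin 2) ℝ) :
    (∀ α, (compMat (-M) α).det ≠ 0) ↔ M 0 0 ≠ 0 ∧ M 1 1 ≠ 0 ∧ M.det ≠ 0 := by
  have hall : ∀ α : Finset (Fin 2), α = ∅ ∨ α = {0} ∨ α = {1} ∨ α = Finset.univ := by decide
  refine ⟨fun h => ⟨?_, ?_, ?_⟩, fun ⟨h0, h1, hdet⟩ α => ?_⟩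
  · simpa [det_fin_two, compMat] using h {0}
  · simpa [det_fin_two, compMat] using h {1}
  · simpa [det_fin_two, compMat] using h Finset.univ
  · rw [det_fin_two] at hdet
    rcases hall α with rfl | rfl | rfl | rfl <;> simp [det_fin_two, compMat, h0, h1, hdet]

lemma exists_near_forall_det_compMat_neg_ne_zero (M : Matrix (Fin 2) (Fin 2) ℝ) {ε : ℝ}
    (hε : 0 < ε) : ∃ N : Matrix (Fin 2) (Fin 2) ℝ,
      (∀ i j, |N i j - M i j| < ε) ∧ ∀ α, (compMat (-N) α).det ≠ 0 := by
  have hbad : ({-M 0 0, -M 1 1} ∪ {t | (M + t • 1).det = 0}).Finite :=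
    (Set.toFinite _).union M.finite_setOf_det_add_smul_one_eq_zero
  obtain ⟨t, ⟨ht0, htε⟩, htbad⟩ := ((Set.Ioo_infinite hε).sdiff hbad).nonempty
  simp only [Set.mem_union, Set.mem_insert_iff, Set.mem_singleton_iff, Set.mem_ofPred_eq,
    not_or] at htbad
  refine ⟨M + t • 1, fun i j => ?_, (forall_det_compMat_neg_ne_zero_iff _).2 ⟨?_, ?_, htbad.2⟩⟩
  · by_cases hij : i = j <;> simp [hij, abs_of_pos ht0, htε, hε]
  · simpa [eq_neg_iff_add_eq_zero, add_comm] using htbad.1.1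
  · simpa [eq_neg_iff_add_eq_zero, add_comm] using htbad.1.2

theorem stmt_16 (M : Matrix (Fin 2) (Fin 2) ℝ)
    (h : M 0 0 = 0 ∨ M 1 1 = 0 ∨ M.det = 0) :
    ∀ ε > 0, ∃ N : Matrix (Fin 2) (Fin 2) ℝ,
      (∀ i j, |N i j - M i j| < ε) ∧ ¬ LCPequiv M N := by
  intro ε hε
  obtain ⟨N, hclose, hN⟩ := exists_near_forall_det_compMat_neg_ne_zero M hε
  refine ⟨N, hclose, fun hMN => ?_⟩
  obtain ⟨α, hα⟩ : ∃ α, (compMat (-M) α).det = 0 := by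
    by_contra! hM
    obtain ⟨h0, h1, hdet⟩ := (forall_det_compMat_neg_ne_zero_iff M).1 hM
    tauto
  obtain ⟨q, hq⟩ := hMN.exists_infinite_setOf_fpl_eq (exists_infinite_setOf_fpl_eq hα)
  exact hq (finite_setOf_fpl_eq hN q)
end
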